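/- Let |ORCI_n| be the number of partial injective contractions of X_n = {1,…,n} that are order-preserving or order-reversing. Then, as an identity of integers, 5·(|ORCI_n| + 1 + n²) = (6n−2)·F_{2n} − (2n−10)·F_{2n+1}; equivalently, |ORCI_n| = ((6n−2)/5)·F_{2n} − ((2n−10)/5)·F_{2n+1} − 1 − n², where F_k denotes the k-th Fibonacci number. -/

import Mathlib

/-- `f` is a partial injective transformation (injectivity on its domain). -/
def PInj {n : ℕ} (f : Fin n → Option (Fin n)) : Prop :=
  ∀ x y a, f x = some a → f y = some a → x = y

/-- `f` is a contraction: `|xα - yα| ≤ |x - y|` for all `x, y` in the domain. -/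
def Contr {n : ℕ} (f : Fin n → Option (Fin n)) : Prop :=
  ∀ x y a b, f x = some a → f y = some b →
    |(a.val : ℤ) - (b.val : ℤ)| ≤ |(x.val : ℤ) - (y.val : ℤ)|

/-- `f` is order-preserving on its domain. -/
def OrdPres {n : ℕ} (f : Fin n → Option (Fin n)) : Prop :=
  ∀ x y a b, f x = some a → f y = some b → x ≤ y → a ≤ b

/-- `f` is order-reversing on its domain. -/
def OrdRev {n : ℕ} (f : Fin n → Option (Fin n)) : Prop :=
  ∀ x y a b, f x = some a → f y = some b → x ≤ y → b ≤ a

/-- `f` is order-decreasing on its domain. -/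
def OrdDecr {n : ℕ} (f : Fin n → Option (Fin n)) : Prop :=
  ∀ x a, f x = some a → a ≤ x

/-- The image set of the partial map `f`. -/
def pim {n : ℕ} (f : Fin n → Option (Fin n)) : Finset (Fin n) :=
  Finset.univ.filter (fun b => ∃ x, f x = some b)

/-- The domain set of the partial map `f`. -/
def pdom {n : ℕ} (f : Fin n → Option (Fin n)) : Finset (Fin n) :=
  Finset.univ.filter (fun x => (f x).isSome)

/-- The height (rank) of the partial map `f`: the size of its image. -/
def pheight {n : ℕ} (f : Fin n → Option (Fin n)) : ℕ := (pim f).card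

/-- The number of fixed points of the partial map `f`. -/
def pfix {n : ℕ} (f : Fin n → Option (Fin n)) : ℕ :=
  (Finset.univ.filter (fun x => f x = some x)).card

/-!
Composing with `a ↦ n - 1 - a` exchanges the order-preserving and the order-reversing
contractions, and the maps that are both are those of rank at most one, so
`|ORCI_n| = 2 |OCI_n| - n² - 1` with `OCI_n` the order-preserving ones.

The graph of an element of `OCI_n` is a chain of points `(x, a)` along which both coordinates
increase and `a` grows no faster than `x`. Removing the rightmost point `(p, q)` leaves such a chain
in the region `x < p, a < q, q - a ≤ p - x`. The numbers `N p q` of chains in these regions satisfy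
`N (p+1) (q+1) = N p q + ∑_{x ≤ p} N x q`, hence `N p q = F_{2p+1}` for `p ≤ q`, and the row sums
`∑_{q<n} N n q` and square sums `∑_{p,q<n} N p q` satisfy a joint first-order recursion whose
solution is a Fibonacci closed form; finally `|OCI_n| = 1 + ∑_{p,q<n} N p q`.
-/

open Finset

lemma sum_range_fib_odd (p : ℕ) : ∑ x ∈ range p, Nat.fib (2 * x + 1) = Nat.fib (2 * p) := by
  induction p with
  | zero => simp
  | succ p ih => rw [sum_range_succ, ih, mul_add_one, Nat.fib_add_two]

/-- The number of order-preserving partial injective contractions with graph in the region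
`x < p, a < q, q - a ≤ p - x` (`card_isOCI_graphBelow`). The recursion splits them according to
whether `q - 1` is in the image, and if so, which `x ≤ p - 1` is mapped to it. -/
def belowCount : ℕ → ℕ → ℕ
  | _, 0 => 1
  | 0, _ + 1 => 1
  | p + 1, q + 1 => belowCount p q + ∑ x ∈ range (p + 1), belowCount x q

@[simp] lemma belowCount_zero_right (p : ℕ) : belowCount p 0 = 1 := by
  cases p <;> rfl

@[simp] lemma belowCount_zero_left (q : ℕ) : belowCount 0 q = 1 := by
  cases q <;> rfl

lemma belowCount_succ_succ (p q : ℕ) :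
    belowCount (p + 1) (q + 1) = belowCount p q + ∑ x ∈ range (p + 1), belowCount x q := rfl

lemma belowCount_of_le {p q : ℕ} (h : p ≤ q) : belowCount p q = Nat.fib (2 * p + 1) := by
  induction q generalizing p with
  | zero => simp [Nat.le_zero.mp h]
  | succ q ih =>
    obtain _ | p := p
    · simp
    have hsum : ∑ x ∈ range (p + 1), belowCount x q = Nat.fib (2 * (p + 1)) := by
      rw [← sum_range_fib_odd]
      exact sum_congr rfl fun x hx => ih (by grind)
    rw [belowCount_succ_succ, ih (by omega), hsum, show 2 * (p + 1) + 1 = 2 * p + 1 + 2 by ring,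
      Nat.fib_add_two]
    rfl

lemma belowCount_eq_one_add_sum (p q : ℕ) :
    belowCount p q =
      1 + ∑ x ∈ range p, ∑ y ∈ range q, if x + q ≤ y + p then belowCount x y else 0 := by
  induction q generalizing p with
  | zero => simp
  | succ q ih =>
    obtain _ | p := p
    · simp
    have hlast : ∀ x ∈ range (p + 1),
        ∑ y ∈ range (q + 1), (if x + (q + 1) ≤ y + (p + 1) then belowCount x y else 0) =
          (∑ y ∈ range q, if x + q ≤ y + p then belowCount x y else 0) + belowCount x q := by
      intro x hx
      rw [sum_range_succ, if_pos (by grind)]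
      simp only [add_le_add_iff_right, ← add_assoc]
    have htop : ∑ y ∈ range q, (if p + q ≤ y + p then belowCount p y else 0) = 0 :=
      sum_eq_zero fun y hy => if_neg (by grind)
    rw [sum_congr rfl hlast, sum_add_distrib, sum_range_succ, htop, add_zero, ← add_assoc,
      ← ih, belowCount_succ_succ]

def belowCountRowSum (n : ℕ) : ℕ := ∑ q ∈ range n, belowCount n q

def belowCountSquareSum (n : ℕ) : ℕ := ∑ p ∈ range n, ∑ q ∈ range n, belowCount p q

lemma belowCountRowSum_succ (n : ℕ) :
    belowCountRowSum (n + 1) = 1 + 2 * belowCountRowSum n + belowCountSquareSum n := by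
  rw [belowCountRowSum, sum_range_succ', belowCount_zero_right]
  simp only [belowCount_succ_succ, sum_add_distrib, sum_range_succ]
  rw [sum_comm]
  simp only [belowCountRowSum, belowCountSquareSum]
  ring

lemma belowCountSquareSum_succ (n : ℕ) :
    belowCountSquareSum (n + 1) =
      belowCountSquareSum n + belowCountRowSum n + Nat.fib (2 * n + 2) := by
  have hcol : ∑ p ∈ range (n + 1), belowCount p n = Nat.fib (2 * n + 2) := by
    rw [← mul_add_one, ← sum_range_fib_odd]
    exact sum_congr rfl fun p hp => belowCount_of_le (by grind)
  simp only [belowCountSquareSum, belowCountRowSum, sum_range_succ (fun p => ∑ q ∈ range _, _),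
    sum_range_succ (belowCount _), sum_add_distrib]
  rw [hcol]

lemma belowCount_sums_closed_form (n : ℕ) :
    5 * (belowCountRowSum n : ℤ) = (2 - n) * Nat.fib (2 * n) + 2 * n * Nat.fib (2 * n + 1) ∧
    5 * (belowCountSquareSum n : ℤ) =
      (3 * n - 1) * Nat.fib (2 * n) + (5 - n) * Nat.fib (2 * n + 1) - 5 := by
  induction n with
  | zero => simp [belowCountRowSum, belowCountSquareSum]
  | succ n ih =>
    obtain ⟨hU, hS⟩ := ih
    have hF2 : (Nat.fib (2 * n + 2) : ℤ) = Nat.fib (2 * n) + Nat.fib (2 * n + 1) := by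
      exact_mod_cast Nat.fib_add_two
    have hF3 : (Nat.fib (2 * n + 3) : ℤ) = Nat.fib (2 * n + 1) + Nat.fib (2 * n + 2) := by
      exact_mod_cast Nat.fib_add_two
    rw [belowCountRowSum_succ, belowCountSquareSum_succ, show 2 * (n + 1) = 2 * n + 2 by ring,
      show 2 * n + 2 + 1 = 2 * n + 3 by ring, hF3, hF2]
    push_cast
    constructor
    · linear_combination 2 * hU + hS
    · linear_combination hU + hS + 5 * hF2

section PartialMaps

variable {n : ℕ}

/-- `(x, a)` can precede `(y, b)` in the graph of an order-preserving partial injective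
contraction. -/
def Precedes (x a y b : ℕ) : Prop := x < y ∧ a < b ∧ x + b ≤ a + y

instance (x a y b : ℕ) : Decidable (Precedes x a y b) := by
  unfold Precedes; infer_instance

lemma Precedes.trans {x a y b z c : ℕ} (h₁ : Precedes x a y b) (h₂ : Precedes y b z c) :
    Precedes x a z c := by
  unfold Precedes at *; omega

lemma Precedes.abs_sub_le {x a y b : ℕ} (h : Precedes x a y b) :
    |(a : ℤ) - b| ≤ |(x : ℤ) - y| := by
  obtain ⟨hxy, hab, h⟩ := h
  rw [abs_of_neg (by omega), abs_of_neg (by omega)]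
  omega

/-- The order-preserving partial injective contractions (the monoid `OCI_n`), described through
their graphs; see `isOCI_iff`. -/
def IsOCI (f : Fin n → Option (Fin n)) : Prop :=
  ∀ x y a b, f x = some a → f y = some b → x < y → Precedes x a y b

lemma isOCI_iff {f : Fin n → Option (Fin n)} :
    PInj f ∧ Contr f ∧ OrdPres f ↔ IsOCI f := by
  constructor
  · rintro ⟨hinj, hcontr, hpres⟩ x y a b hx hy hxy
    have hab : a < b := lt_of_le_of_ne (hpres x y a b hx hy hxy.le) fun hab =>
      hxy.ne (hinj x y a hx (hab ▸ hy))
    have hcd := hcontr x y a b hx hy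
    rw [abs_of_neg (by omega), abs_of_neg (by omega)] at hcd
    exact ⟨hxy, hab, by omega⟩
  · intro h
    have hsame : ∀ {x a b}, f x = some a → f x = some b → a = b := fun hx hy =>
      Option.some_injective _ (hx.symm.trans hy)
    refine ⟨fun x y a hx hy => ?_, fun x y a b hx hy => ?_, fun x y a b hx hy hxy => ?_⟩
    · by_contra hne
      rcases lt_or_gt_of_ne hne with hxy | hxy
      · exact (h x y a a hx hy hxy).2.1.false
      · exact (h y x a a hy hx hxy).2.1.false
    · rcases lt_trichotomy x y with hxy | rfl | hxy
      · exact (h x y a b hx hy hxy).abs_sub_le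
      · simp [hsame hx hy]
      · rw [abs_sub_comm, abs_sub_comm (x : ℤ)]
        exact (h y x b a hy hx hxy).abs_sub_le
    · rcases hxy.lt_or_eq with hxy | rfl
      · exact (h x y a b hx hy hxy).2.1.le
      · exact (hsame hx hy).le

lemma pInj_contr_ordPres_ordRev_iff {f : Fin n → Option (Fin n)} :
    PInj f ∧ Contr f ∧ OrdPres f ∧ OrdRev f ↔
      ∀ x y a b, f x = some a → f y = some b → x = y := by
  have hsame : ∀ {x a b}, f x = some a → f x = some b → a = b := fun hx hy =>
    Option.some_injective _ (hx.symm.trans hy)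
  constructor
  · rintro ⟨hinj, -, hpres, hrev⟩ x y a b hx hy
    have hab : a = b := by
      rcases le_total x y with hxy | hxy
      · exact le_antisymm (hpres x y a b hx hy hxy) (hrev x y a b hx hy hxy)
      · exact le_antisymm (hrev y x b a hy hx hxy) (hpres y x b a hy hx hxy)
    exact hinj x y a hx (hab ▸ hy)
  · intro h
    refine ⟨fun x y a hx hy => h x y a a hx hy, fun x y a b hx hy => ?_,
      fun x y a b hx hy _ => ?_, fun x y a b hx hy _ => ?_⟩ <;>
    · obtain rfl := h x y a b hx hy
      simp [hsame hx hy]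

end PartialMaps

section TopPoint

variable {n : ℕ}

def GraphBelow (P Q : ℕ) (f : Fin n → Option (Fin n)) : Prop :=
  ∀ x a, f x = some a → Precedes x a P Q

def topPoint (f : Fin n → Option (Fin n)) : Option (Fin n × Fin n) :=
  if h : (pdom f).Nonempty then (f ((pdom f).max' h)).map ((pdom f).max' h, ·) else none

lemma mem_pdom {f : Fin n → Option (Fin n)} {x : Fin n} : x ∈ pdom f ↔ (f x).isSome := by
  simp [pdom]

lemma topPoint_eq_none_iff {f : Fin n → Option (Fin n)} :
    topPoint f = none ↔ f = fun _ => none := by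
  unfold topPoint
  split_ifs with h
  · obtain ⟨a, ha⟩ := Option.isSome_iff_exists.mp (mem_pdom.mp ((pdom f).max'_mem h))
    simp only [ha, Option.map_some, reduceCtorEq, false_iff]
    rintro rfl
    simp at ha
  · simp_all [Finset.not_nonempty_iff_eq_empty, pdom, Finset.filter_eq_empty_iff, funext_iff]

lemma topPoint_eq_some_iff {f : Fin n → Option (Fin n)} {p q : Fin n} :
    topPoint f = some (p, q) ↔ f p = some q ∧ ∀ x a, f x = some a → x ≤ p := by
  have hmem : ∀ {x a}, f x = some a → x ∈ pdom f := fun hx => mem_pdom.mpr (by simp [hx])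
  unfold topPoint
  split_ifs with h
  · simp only [Option.map_eq_some_iff, Prod.mk.injEq]
    constructor
    · rintro ⟨a, ha, rfl, rfl⟩
      exact ⟨ha, fun x b hx => (pdom f).le_max' x (hmem hx)⟩
    · rintro ⟨hp, hle⟩
      obtain ⟨a, ha⟩ := Option.isSome_iff_exists.mp (mem_pdom.mp ((pdom f).max'_mem h))
      obtain rfl : (pdom f).max' h = p := le_antisymm (hle _ _ ha) ((pdom f).le_max' p (hmem hp))
      exact ⟨q, hp, rfl, rfl⟩
  · simp only [false_iff, not_and]
    exact fun hp => absurd ⟨p, hmem hp⟩ h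

variable {f g : Fin n → Option (Fin n)} {p q x a : Fin n}

lemma IsOCI.of_graph_subset (hf : IsOCI f) (hg : ∀ x a, g x = some a → f x = some a) :
    IsOCI g :=
  fun x y a b hx hy => hf x y a b (hg x a hx) (hg y b hy)

lemma IsOCI.precedes_of_topPoint (hf : IsOCI f) (ht : topPoint f = some (p, q))
    (hx : f x = some a) (hxp : x ≠ p) : Precedes x a p q :=
  have ⟨hp, hle⟩ := topPoint_eq_some_iff.mp ht
  hf x p a q hx hp (lt_of_le_of_ne (hle x a hx) hxp)

lemma IsOCI.graphBelow_of_topPoint {P Q : ℕ} (hf : IsOCI f) (ht : topPoint f = some (p, q))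
    (hpq : Precedes p q P Q) : GraphBelow P Q f := by
  intro x a hx
  by_cases hxp : x = p
  · subst hxp
    obtain rfl : a = q := Option.some_injective _ (hx.symm.trans (topPoint_eq_some_iff.mp ht).1)
    exact hpq
  · exact (hf.precedes_of_topPoint ht hx hxp).trans hpq

lemma IsOCI.graphBelow_update_none (hf : IsOCI f) (ht : topPoint f = some (p, q)) :
    GraphBelow p q (Function.update f p none) := by
  intro x a hx
  rw [Function.update_apply] at hx
  split_ifs at hx with hxp
  exact hf.precedes_of_topPoint ht hx hxp

lemma IsOCI.update_some (hg : IsOCI g) (hb : GraphBelow p q g) :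
    IsOCI (Function.update g p (some q)) := by
  intro x y a b hx hy hxy
  rw [Function.update_apply] at hx hy
  split_ifs at hx hy with hxp hyp hyp
  · simp [hxp, hyp] at hxy
  · have hyx : y < x := hxp ▸ (hb y b hy).1
    exact absurd hxy hyx.not_gt
  · cases hy
    exact hyp ▸ hb x a hx
  · exact hg x y a b hx hy hxy

lemma GraphBelow.apply_eq_none (hb : GraphBelow p q g) : g p = none :=
  Option.eq_none_iff_forall_ne_some.mpr fun a hp => (hb p a hp).1.false

lemma topPoint_update_some (hb : GraphBelow p q g) :
    topPoint (Function.update g p (some q)) = some (p, q) := by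
  refine topPoint_eq_some_iff.mpr ⟨Function.update_self .., fun x a hx => ?_⟩
  rw [Function.update_apply] at hx
  split_ifs at hx with hxp
  · exact hxp.le
  · exact (hb x a hx).1.le

end TopPoint

def eraseTopPointEquiv {n : ℕ} (p q : Fin n) :
    {f : Fin n → Option (Fin n) // IsOCI f ∧ topPoint f = some (p, q)} ≃
      {g : Fin n → Option (Fin n) // IsOCI g ∧ GraphBelow p q g} where
  toFun f := ⟨Function.update f.1 p none,
    f.2.1.of_graph_subset fun x a hx => by
      rw [Function.update_apply] at hx
      split_ifs at hx
      exact hx,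
    f.2.1.graphBelow_update_none f.2.2⟩
  invFun g := ⟨Function.update g.1 p (some q), g.2.1.update_some g.2.2, topPoint_update_some g.2.2⟩
  left_inv f := Subtype.ext <| by
    simp [← (topPoint_eq_some_iff.mp f.2.2).1]
  right_inv g := Subtype.ext <| by
    simp [← g.2.2.apply_eq_none]

section Counting

variable {n : ℕ}

lemma card_eq_one_add_sum_card_topPoint (C : (Fin n → Option (Fin n)) → Prop)
    (hC : C fun _ => none) :
    Nat.card {f // C f} = 1 + ∑ pq : Fin n × Fin n, Nat.card {f // C f ∧ topPoint f = some pq} := by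
  rw [← Nat.card_congr (Equiv.sigmaFiberEquiv fun f : {f // C f} => topPoint f.1),
    Nat.card_sigma, Fintype.sum_option]
  congr 1
  · rw [Nat.card_eq_one_iff_exists]
    refine ⟨⟨⟨_, hC⟩, topPoint_eq_none_iff.mpr rfl⟩, fun ⟨⟨f, _⟩, hf⟩ => ?_⟩
    obtain rfl := topPoint_eq_none_iff.mp hf
    rfl
  · exact sum_congr rfl fun pq _ =>
      Nat.card_congr (Equiv.subtypeSubtypeEquivSubtypeInter C (topPoint · = some pq))

lemma sum_fin_prod_eq_sum_range {M : Type*} [AddCommMonoid M] (g : ℕ → ℕ → M) :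
    ∑ pq : Fin n × Fin n, g pq.1 pq.2 = ∑ x ∈ range n, ∑ y ∈ range n, g x y := by
  rw [Fintype.sum_prod_type, ← Fin.sum_univ_eq_sum_range]
  exact sum_congr rfl fun x _ => Fin.sum_univ_eq_sum_range (g x) n

lemma sum_range_ite_lt {M : Type*} [AddCommMonoid M] {P m : ℕ} (hP : P ≤ m) (F : ℕ → M) :
    ∑ x ∈ range m, (if x < P then F x else 0) = ∑ x ∈ range P, F x := by
  rw [← sum_filter]
  congr 1
  ext
  simp only [mem_filter, mem_range]
  omega

lemma sum_fin_prod_ite_precedes (g : ℕ → ℕ → ℕ) {P Q : ℕ} (hP : P ≤ n) (hQ : Q ≤ n) :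
    ∑ pq : Fin n × Fin n, (if Precedes pq.1 pq.2 P Q then g pq.1 pq.2 else 0) =
      ∑ x ∈ range P, ∑ y ∈ range Q, if x + Q ≤ y + P then g x y else 0 := by
  rw [sum_fin_prod_eq_sum_range fun x y => if Precedes x y P Q then g x y else 0]
  simp only [Precedes, ite_and, sum_ite_irrel, sum_const_zero, sum_range_ite_lt hP,
    sum_range_ite_lt hQ]

lemma card_isOCI_graphBelow {P Q : ℕ} (hP : P ≤ n) (hQ : Q ≤ n) :
    Nat.card {f : Fin n → Option (Fin n) // IsOCI f ∧ GraphBelow P Q f} = belowCount P Q := by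
  induction P using Nat.strong_induction_on generalizing Q with
  | _ P ih =>
    have hfiber (pq : Fin n × Fin n) :
        Nat.card {f // (IsOCI f ∧ GraphBelow P Q f) ∧ topPoint f = some pq} =
          if Precedes pq.1 pq.2 P Q then belowCount pq.1 pq.2 else 0 := by
      obtain ⟨p, q⟩ := pq
      split_ifs with hpq
      · rw [← ih p hpq.1 p.isLt.le q.isLt.le, ← Nat.card_congr (eraseTopPointEquiv p q)]
        exact Nat.card_congr <| Equiv.subtypeEquivRight fun f =>
          ⟨fun ⟨⟨hf, _⟩, ht⟩ => ⟨hf, ht⟩,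
            fun ⟨hf, ht⟩ => ⟨⟨hf, hf.graphBelow_of_topPoint ht hpq⟩, ht⟩⟩
      · exact Nat.card_eq_zero.mpr <| .inl
          ⟨fun ⟨_, ⟨_, hb⟩, ht⟩ => hpq (hb p q (topPoint_eq_some_iff.mp ht).1)⟩
    have hempty : IsOCI (n := n) (fun _ => none) ∧ GraphBelow P Q (n := n) (fun _ => none) :=
      ⟨fun _ _ _ _ h => (nomatch h), fun _ _ h => nomatch h⟩
    rw [card_eq_one_add_sum_card_topPoint _ hempty, sum_congr rfl fun pq _ => hfiber pq,
      sum_fin_prod_ite_precedes _ hP hQ, belowCount_eq_one_add_sum]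

end Counting

section Reversal

variable {n : ℕ} {f : Fin n → Option (Fin n)}

def revMap (f : Fin n → Option (Fin n)) : Fin n → Option (Fin n) :=
  fun x => (f x).map Fin.rev

lemma revMap_eq_some {x a : Fin n} : revMap f x = some a ↔ f x = some a.rev := by
  simp only [revMap, Option.map_eq_some_iff]
  constructor
  · rintro ⟨b, hb, rfl⟩
    rwa [Fin.rev_rev]
  · exact fun h => ⟨_, h, Fin.rev_rev a⟩

lemma revMap_revMap (f : Fin n → Option (Fin n)) : revMap (revMap f) = f := by
  funext x
  simp [revMap, Option.map_map, Function.comp_def]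

lemma PInj.revMap (h : PInj f) : PInj (revMap f) :=
  fun x y a hx hy => h x y a.rev (revMap_eq_some.mp hx) (revMap_eq_some.mp hy)

lemma Contr.revMap (h : Contr f) : Contr (revMap f) := by
  intro x y a b hx hy
  have hrev : ((a.rev : ℕ) : ℤ) - (b.rev : ℕ) = (b : ℤ) - a := by
    have := a.isLt
    have := b.isLt
    simp only [Fin.val_rev]
    omega
  simpa [hrev, abs_sub_comm] using h x y a.rev b.rev (revMap_eq_some.mp hx) (revMap_eq_some.mp hy)

lemma OrdPres.revMap (h : OrdPres f) : OrdRev (revMap f) :=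
  fun x y a b hx hy hxy =>
    Fin.rev_le_rev.mp (h x y a.rev b.rev (revMap_eq_some.mp hx) (revMap_eq_some.mp hy) hxy)

lemma OrdRev.revMap (h : OrdRev f) : OrdPres (revMap f) :=
  fun x y a b hx hy hxy =>
    Fin.rev_le_rev.mp (h x y a.rev b.rev (revMap_eq_some.mp hx) (revMap_eq_some.mp hy) hxy)

def revMapEquiv :
    {f : Fin n → Option (Fin n) // PInj f ∧ Contr f ∧ OrdRev f} ≃
      {f : Fin n → Option (Fin n) // PInj f ∧ Contr f ∧ OrdPres f} where
  toFun f := ⟨revMap f, f.2.1.revMap, f.2.2.1.revMap, f.2.2.2.revMap⟩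
  invFun f := ⟨revMap f, f.2.1.revMap, f.2.2.1.revMap, f.2.2.2.revMap⟩
  left_inv f := Subtype.ext (revMap_revMap f.1)
  right_inv f := Subtype.ext (revMap_revMap f.1)

end Reversal

lemma Nat.card_subtype_or_add_card_subtype_and {α : Type*} [Finite α] (p q : α → Prop) :
    Nat.card {x // p x ∨ q x} + Nat.card {x // p x ∧ q x} =
      Nat.card {x // p x} + Nat.card {x // q x} :=
  Set.ncard_union_add_ncard_inter {x | p x} {x | q x}

section Cardinalities

variable (n : ℕ)

lemma card_isOCI :
    Nat.card {f : Fin n → Option (Fin n) // IsOCI f} = 1 + belowCountSquareSum n := by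
  have hfiber (pq : Fin n × Fin n) :
      Nat.card {f // IsOCI f ∧ topPoint f = some pq} = belowCount pq.1 pq.2 :=
    (Nat.card_congr (eraseTopPointEquiv pq.1 pq.2)).trans
      (card_isOCI_graphBelow pq.1.isLt.le pq.2.isLt.le)
  rw [card_eq_one_add_sum_card_topPoint _ fun _ _ _ _ h => (nomatch h),
    sum_congr rfl fun pq _ => hfiber pq, sum_fin_prod_eq_sum_range (belowCount · ·)]
  rfl

lemma card_pInj_contr_ordPres :
    Nat.card {f : Fin n → Option (Fin n) // PInj f ∧ Contr f ∧ OrdPres f} =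
      1 + belowCountSquareSum n := by
  rw [Nat.card_congr (Equiv.subtypeEquivRight fun f => isOCI_iff), card_isOCI]

lemma card_pInj_contr_ordRev :
    Nat.card {f : Fin n → Option (Fin n) // PInj f ∧ Contr f ∧ OrdRev f} =
      1 + belowCountSquareSum n := by
  rw [Nat.card_congr revMapEquiv, card_pInj_contr_ordPres]

lemma card_pInj_contr_ordPres_ordRev :
    Nat.card {f : Fin n → Option (Fin n) // PInj f ∧ Contr f ∧ OrdPres f ∧ OrdRev f} =
      n ^ 2 + 1 := by
  rw [Nat.card_congr (Equiv.subtypeEquivRight fun f => pInj_contr_ordPres_ordRev_iff),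
    card_eq_one_add_sum_card_topPoint _ fun _ _ _ _ h => (nomatch h)]
  have hfiber (pq : Fin n × Fin n) : Nat.card {f : Fin n → Option (Fin n) //
      (∀ x y a b, f x = some a → f y = some b → x = y) ∧ topPoint f = some pq} = 1 := by
    obtain ⟨p, q⟩ := pq
    have hb : GraphBelow p q (n := n) fun _ => none := fun _ _ h => nomatch h
    rw [Nat.card_eq_one_iff_exists]
    refine ⟨⟨Function.update (fun _ => none) p (some q), fun x y a b hx hy => ?_,
      topPoint_update_some hb⟩, fun ⟨f, hf, ht⟩ => Subtype.ext (funext fun x => ?_)⟩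
    · simp only [Function.update_apply, Option.ite_none_right_eq_some] at hx hy
      exact hx.1.trans hy.1.symm
    · obtain ⟨hp, -⟩ := topPoint_eq_some_iff.mp ht
      dsimp only
      by_cases hxp : x = p
      · simpa [hxp] using hp
      · rw [Function.update_of_ne hxp]
        exact Option.eq_none_iff_forall_ne_some.mpr fun a hx => hxp (hf x p a q hx hp)
  simp only [hfiber, sum_const, card_univ, Fintype.card_prod, Fintype.card_fin, smul_eq_mul,
    mul_one]
  ring

lemma card_orci_add_card_pInj_contr_ordPres_ordRev :
    Nat.card {f : Fin n → Option (Fin n) // PInj f ∧ Contr f ∧ (OrdPres f ∨ OrdRev f)} +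
        Nat.card {f : Fin n → Option (Fin n) // PInj f ∧ Contr f ∧ OrdPres f ∧ OrdRev f} =
      Nat.card {f : Fin n → Option (Fin n) // PInj f ∧ Contr f ∧ OrdPres f} +
        Nat.card {f : Fin n → Option (Fin n) // PInj f ∧ Contr f ∧ OrdRev f} := by
  refine Eq.trans ?_ (Nat.card_subtype_or_add_card_subtype_and
    (fun f : Fin n → Option (Fin n) => PInj f ∧ Contr f ∧ OrdPres f)
    (fun f => PInj f ∧ Contr f ∧ OrdRev f))
  congr 1 <;> exact Nat.card_congr (Equiv.subtypeEquivRight fun f => by tauto)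

end Cardinalities

/-- The order of `ORCI_n` satisfies
`5·(|ORCI_n| + 1 + n²) = (6n-2)·F_{2n} - (2n-10)·F_{2n+1}`. -/
theorem ORCI_order (n : ℕ) :
    (5 : ℤ) * ((Nat.card {f : Fin n → Option (Fin n) //
        PInj f ∧ Contr f ∧ (OrdPres f ∨ OrdRev f)} : ℤ) + 1 + (n : ℤ) ^ 2) =
      (6 * (n : ℤ) - 2) * Nat.fib (2 * n) -
        (2 * (n : ℤ) - 10) * Nat.fib (2 * n + 1) := by
  have hcount := card_orci_add_card_pInj_contr_ordPres_ordRev n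
  rw [card_pInj_contr_ordPres_ordRev, card_pInj_contr_ordPres, card_pInj_contr_ordRev] at hcount
  have hS := (belowCount_sums_closed_form n).2
  zify at hcount
  linear_combination 5 * hcount + 2 * hS
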